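/- Let f be a Boolean network of dimension n and ⟨f⟩ its interval-semantics encoding. For every i ∈ {1,…,n}: (2i−1, 2i−1) is a positive edge (positive self-loop) of G(⟨f⟩) if and only if there exists x ∈ 𝔹^n such that f_i(x) = x_i. -/

import Mathlib

/-- Asynchronous transition relation of a Boolean network `f`:
`x → y` iff exactly one component `i` differs and `y i = f i x`. -/
def asyncStep {ι : Type} (f : ι → (ι → Bool) → Bool) (x y : ι → Bool) : Prop :=
  ∃ i : ι, x i ≠ y i ∧ (∀ j : ι, j ≠ i → x j = y j) ∧ y i = f i x

/-- Index of the "write" node `2i-1` (0-indexed: `2i`). -/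
def wIdx {n : ℕ} (i : Fin n) : Fin (2 * n) := ⟨2 * i.val, by have := i.isLt; omega⟩

/-- Index of the "read" node `2i` (0-indexed: `2i+1`). -/
def rIdx {n : ℕ} (i : Fin n) : Fin (2 * n) := ⟨2 * i.val + 1, by have := i.isLt; omega⟩

/-- `γ : 𝔹^{2n} → 𝔹^n`, projection on read nodes. -/
def gam {n : ℕ} (z : Fin (2 * n) → Bool) : Fin n → Bool := fun i => z (rIdx i)

/-- `α : 𝔹^n → 𝔹^{2n}`, consistent configuration. -/
def alph {n : ℕ} (x : Fin n → Bool) : Fin (2 * n) → Bool :=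
  fun k => x ⟨k.val / 2, by have := k.isLt; omega⟩

/-- Interval-semantics encoding `⟨f⟩` of a Boolean network `f`. -/
def encode {n : ℕ} (f : Fin n → (Fin n → Bool) → Bool) :
    Fin (2 * n) → (Fin (2 * n) → Bool) → Bool := fun k z =>
  let i : Fin n := ⟨k.val / 2, by have := k.isLt; omega⟩
  if k.val % 2 = 0 then
    (f i (gam z) && (!(z (rIdx i)) || z (wIdx i))) || (!(z (rIdx i)) && z (wIdx i))
  else
    z (wIdx i)

/-- Positive edge `(j,i)` of the influence graph `G(f)`. -/
def posEdge {ι : Type} (f : ι → (ι → Bool) → Bool) (j i : ι) : Prop :=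
  ∃ x y : ι → Bool, (∀ k : ι, k ≠ j → x k = y k) ∧ x j = false ∧ y j = true ∧
    f i x = false ∧ f i y = true

/-- Negative edge `(j,i)` of the influence graph `G(f)`. -/
def negEdge {ι : Type} (f : ι → (ι → Bool) → Bool) (j i : ι) : Prop :=
  ∃ x y : ι → Bool, (∀ k : ι, k ≠ j → x k = y k) ∧ x j = false ∧ y j = true ∧
    f i x = true ∧ f i y = false

/-! Writing `r` for the read node of component `i`, the write node `w` of `i` is updated
by `(f_i(γ z) ∧ (¬r ∨ w)) ∨ (¬r ∧ w)`; at `w = 0` this is `f_i(γ z) ∧ ¬r` and at `w = 1` it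
is `f_i(γ z) ∨ ¬r`. Flipping `w` from `0` to `1` raises it exactly when `f_i(γ z) = r = (γ z)_i`,
and since `γ` is surjective, such a `z` exists iff some `x` satisfies `f_i(x) = x_i`. -/

open Function

theorem posEdge_iff_exists_update {ι : Type} [DecidableEq ι] (g : ι → (ι → Bool) → Bool)
    (j k : ι) :
    posEdge g j k ↔
      ∃ z : ι → Bool, g k (update z j false) = false ∧ g k (update z j true) = true := by
  constructor
  · rintro ⟨x, y, hxy, hx, hy, hgx, hgy⟩
    have hy' : update x j true = y := by
      funext l
      by_cases hl : l = j
      · subst hl; simp [hy]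
      · simp [update_of_ne hl, hxy l hl]
    exact ⟨x, by rwa [update_eq_self_iff.mpr hx.symm], by rwa [hy']⟩
  · rintro ⟨z, h0, h1⟩
    exact ⟨update z j false, update z j true, fun l hl => by simp [update_of_ne hl],
      by simp, by simp, h0, h1⟩

theorem Bool.and_not_eq_false_and_or_not_eq_true_iff (a r : Bool) :
    (a && !r) = false ∧ (a || !r) = true ↔ a = r := by
  cases a <;> cases r <;> decide

variable {n : ℕ}

theorem wIdx_ne_rIdx (i j : Fin n) : wIdx i ≠ rIdx j := by
  simp only [wIdx, rIdx, ne_eq, Fin.ext_iff]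
  omega

theorem gam_update_wIdx (z : Fin (2 * n) → Bool) (i : Fin n) (b : Bool) :
    gam (update z (wIdx i) b) = gam z := by
  funext j
  exact update_of_ne (wIdx_ne_rIdx i j).symm b z

theorem gam_alph (x : Fin n → Bool) : gam (alph x) = x := by
  funext i
  simp only [gam, alph, rIdx]
  congr 1
  ext
  simp only
  omega

theorem gam_surjective : Surjective (gam : (Fin (2 * n) → Bool) → Fin n → Bool) :=
  fun x => ⟨alph x, gam_alph x⟩

theorem encode_wIdx (f : Fin n → (Fin n → Bool) → Bool) (i : Fin n)
    (z : Fin (2 * n) → Bool) :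
    encode f (wIdx i) z =
      ((f i (gam z) && (!gam z i || z (wIdx i))) || (!gam z i && z (wIdx i))) := by
  have hpar : (wIdx i).val % 2 = 0 := by simp [wIdx]
  have hcomp : (⟨(wIdx i).val / 2, by omega⟩ : Fin n) = i := by ext; simp [wIdx]
  simp only [encode, hpar, if_true, hcomp, gam]

theorem encode_wIdx_update_false (f : Fin n → (Fin n → Bool) → Bool) (i : Fin n)
    (z : Fin (2 * n) → Bool) :
    encode f (wIdx i) (update z (wIdx i) false) = (f i (gam z) && !gam z i) := by
  rw [encode_wIdx, gam_update_wIdx, update_self]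
  simp

theorem encode_wIdx_update_true (f : Fin n → (Fin n → Bool) → Bool) (i : Fin n)
    (z : Fin (2 * n) → Bool) :
    encode f (wIdx i) (update z (wIdx i) true) = (f i (gam z) || !gam z i) := by
  rw [encode_wIdx, gam_update_wIdx, update_self]
  simp

/-- `(2i−1, 2i−1)` is a positive self-loop of `G(⟨f⟩)` iff
there exists `x` with `f_i(x) = x_i`. -/
theorem pos_selfloop_iff {n : ℕ} (f : Fin n → (Fin n → Bool) → Bool) (i : Fin n) :
    posEdge (encode f) (wIdx i) (wIdx i) ↔ ∃ x : Fin n → Bool, f i x = x i := by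
  simp only [posEdge_iff_exists_update, encode_wIdx_update_false, encode_wIdx_update_true,
    Bool.and_not_eq_false_and_or_not_eq_true_iff]
  exact (gam_surjective.exists (p := fun x => f i x = x i)).symm
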